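/- Let m ≤ n/2 and let C ⊆ {0,1}^{2m} be the set of vectors x with x_{2i-1} = x_{2i} for all i = 1,...,m. Then the uniform distribution u_C on C (viewed as a 2^m × 2^m matrix with rows indexed by (x_1,x_3,...,x_{2m-1}) and columns by (x_2,x_4,...,x_{2m})) equals (1/2^m) times the identity matrix and has matrix rank 2^m; consequently u_C cannot be written as a convex combination of fewer than 2^m product distributions on {0,1}^{2m}. -/
import Mathlib


/-- Interleaving: the vector of `{0,1}^{2m}` whose even-indexed coordinates come from `r`
and odd-indexed coordinates from `c` (`0`-indexed; corresponding to `(x_1,x_3,…)` and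
`(x_2,x_4,…)` in `1`-indexed notation). -/
def interleave (m : ℕ) (r c : Fin m → Bool) : Fin (2 * m) → Bool :=
  fun j => if j.val % 2 = 0 then r ⟨j.val / 2, by have := j.isLt; omega⟩
    else c ⟨j.val / 2, by have := j.isLt; omega⟩

/-- The uniform distribution on the code `C ⊆ {0,1}^{2m}` of vectors `x` with
`x_{2i-1} = x_{2i}` for all `i` (`1`-indexed). -/
noncomputable def uC (m : ℕ) (x : Fin (2 * m) → Bool) : ℝ :=
  if ∀ i : Fin m, x ⟨2 * i.val, by have := i.isLt; omega⟩ =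
      x ⟨2 * i.val + 1, by have := i.isLt; omega⟩
  then 1 / 2 ^ m else 0

lemma uC_interleave (m : ℕ) (r c : Fin m → Bool) :
    uC m (interleave m r c) = if r = c then (1 : ℝ) / 2 ^ m else 0 := by
  unfold uC interleave
  congr 1
  simp only [eq_iff_iff]
  constructor
  · intro h
    funext i
    have := h i
    simpa [Nat.mul_mod_right, Nat.mul_div_cancel_left, Nat.mul_add_mod,
      Nat.mul_add_div] using this
  · intro h i
    subst h
    simp [Nat.mul_mod_right, Nat.mul_div_cancel_left, Nat.mul_add_mod, Nat.mul_add_div]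

/-- For `m ≤ n/2`, the flattening of the uniform distribution `u_C` on the pair-repetition
code, with rows indexed by odd-position and columns by even-position coordinates, equals
`(1/2^m)` times the identity matrix, has rank `2^m`, and consequently `u_C` is not a convex
combination of fewer than `2^m` product distributions on `{0,1}^{2m}`. -/
theorem uC_flattening_identity_rank_and_nonneg_rank
    (n m : ℕ) (h2m : 2 * m ≤ n) :
    (Matrix.of (fun r c : Fin m → Bool => uC m (interleave m r c)) =
      ((1 : ℝ) / 2 ^ m) • (1 : Matrix (Fin m → Bool) (Fin m → Bool) ℝ)) ∧
    (Matrix.of (fun r c : Fin m → Bool => uC m (interleave m r c))).rank = 2 ^ m ∧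
    ¬ ∃ (k : ℕ), k < 2 ^ m ∧
      ∃ (α : Fin k → ℝ) (q : Fin k → (Fin (2 * m) → Bool) → ℝ),
        (∀ j, 0 ≤ α j) ∧ (∑ j, α j = 1) ∧
        (∀ j, ∃ f : Fin (2 * m) → Bool → ℝ, (∀ i b, 0 ≤ f i b) ∧
          (∀ i, f i false + f i true = 1) ∧ ∀ x, q j x = ∏ i, f i (x i)) ∧
        (∀ x, uC m x = ∑ j, α j * q j x) := by
  set c : ℝ := (1 : ℝ) / 2 ^ m with hc
  have hc0 : c ≠ 0 := by positivity
  have hM : (Matrix.of (fun r c : Fin m → Bool => uC m (interleave m r c)) =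
      c • (1 : Matrix (Fin m → Bool) (Fin m → Bool) ℝ)) := by
    ext r c'
    simp [uC_interleave, Matrix.one_apply, hc]
  have hcard : Fintype.card (Fin m → Bool) = 2 ^ m := by simp
  have hrank : (Matrix.of (fun r c : Fin m → Bool => uC m (interleave m r c))).rank = 2 ^ m := by
    rw [hM]
    refine le_antisymm ((Matrix.rank_le_card_width _).trans_eq hcard) ?_
    have hmul : (c • (1 : Matrix (Fin m → Bool) (Fin m → Bool) ℝ)) *
        (c⁻¹ • (1 : Matrix (Fin m → Bool) (Fin m → Bool) ℝ)) = 1 := by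
      rw [Matrix.smul_mul, Matrix.mul_smul, one_mul, smul_smul, mul_inv_cancel₀ hc0, one_smul]
    calc (2 : ℕ) ^ m = ((1 : Matrix (Fin m → Bool) (Fin m → Bool) ℝ)).rank := by
          rw [Matrix.rank_one, hcard]
      _ = ((c • (1 : Matrix (Fin m → Bool) (Fin m → Bool) ℝ)) *
            (c⁻¹ • (1 : Matrix (Fin m → Bool) (Fin m → Bool) ℝ))).rank := by rw [hmul]
      _ ≤ _ := Matrix.rank_mul_le_left _ _
  refine ⟨hM, hrank, ?_⟩
  rintro ⟨k, hk, α, q, hα0, hα1, hq, hdecomp⟩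
  choose f hf0 hf1 hfq using hq
  -- rank-one decomposition of the flattening
  set A : Matrix (Fin m → Bool) (Fin k) ℝ := fun r j =>
    α j * ∏ i : Fin (2 * m), if i.val % 2 = 0 then
      f j i (r ⟨i.val / 2, by have := i.isLt; omega⟩) else 1 with hA
  set B : Matrix (Fin k) (Fin m → Bool) ℝ := fun j c' =>
    ∏ i : Fin (2 * m), if i.val % 2 = 0 then 1
      else f j i (c' ⟨i.val / 2, by have := i.isLt; omega⟩) with hB
  have hAB : Matrix.of (fun r c : Fin m → Bool => uC m (interleave m r c)) = A * B := by
    ext r c'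
    rw [Matrix.mul_apply]
    simp only [Matrix.of_apply, hA, hB]
    rw [hdecomp]
    refine Finset.sum_congr rfl fun j _ => ?_
    rw [hfq, mul_assoc, ← Finset.prod_mul_distrib]
    congr 1
    refine Finset.prod_congr rfl fun i _ => ?_
    unfold interleave
    by_cases hp : i.val % 2 = 0 <;> simp [hp]
  have : (Matrix.of (fun r c : Fin m → Bool => uC m (interleave m r c))).rank ≤ k := by
    rw [hAB]
    exact (Matrix.rank_mul_le_left A B).trans
      ((Matrix.rank_le_card_width A).trans_eq (Fintype.card_fin k))
  omega
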